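/- Let f : X → ℝ be lower semicontinuous, Gâteaux differentiable, bounded below, G-invariant, convex with respect to G, and suppose there exist constants k, c > 0 such that f(x) ≥ k‖x‖ + c for all x ∈ X. Then the set {δf(x) : x ∈ X, x is G-invariant} is dense in kB_G = {u ∈ X*_G : ‖u‖ ≤ k}; that is, for every u ∈ X*_G with ‖u‖ ≤ k and every η > 0 there exists a G-invariant point x ∈ X with ‖δf(x) − u‖ < η. -/

import Mathlib

open MeasureTheory Filter

/-- Ekeland's variational principle (weak form): a lower semicontinuous function bounded
below on a complete metric space admits points where the slope is at most `ε`. -/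
lemma ekeland_weak {M : Type*} [MetricSpace M] [CompleteSpace M] [Nonempty M]
    (h : M → ℝ) (hlsc : LowerSemicontinuous h) {B : ℝ} (hbdd : ∀ y, B ≤ h y)
    {ε : ℝ} (hε : 0 < ε) : ∃ x : M, ∀ y : M, h x - ε * dist x y ≤ h y := by
  classical
  set S : M → Set M := fun a => {y | h y + ε * dist a y ≤ h a} with hS
  have hmemS : ∀ a, a ∈ S a := fun a => by simp [hS]
  have hSne : ∀ a, (S a).Nonempty := fun a => ⟨a, hmemS a⟩
  have hbddS : ∀ a, BddBelow (h '' S a) := fun a => ⟨B, by rintro _ ⟨y, _, rfl⟩; exact hbdd y⟩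
  have key : ∀ (n : ℕ) (a : M), ∃ y, y ∈ S a ∧ h y ≤ sInf (h '' S a) + (1/2) ^ n := by
    intro n a
    have hpow : (0:ℝ) < (1/2) ^ n := by positivity
    have h1 : sInf (h '' S a) < sInf (h '' S a) + (1/2) ^ n := by linarith
    obtain ⟨z, hz, hz2⟩ := exists_lt_of_csInf_lt ((hSne a).image h) h1
    obtain ⟨y, hy, rfl⟩ := hz
    exact ⟨y, hy, hz2.le⟩
  choose next hmem hval using key
  let x : ℕ → M := fun n => Nat.rec (Classical.arbitrary M) (fun n xn => next n xn) n
  have hstep : ∀ n, x (n + 1) ∈ S (x n) := fun n => hmem n (x n)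
  have hSsub : ∀ a b, b ∈ S a → S b ⊆ S a := by
    intro a b hb y hy
    simp only [hS, Set.mem_setOf_eq] at *
    have htri : dist a y ≤ dist a b + dist b y := dist_triangle a b y
    have h2 := mul_le_mul_of_nonneg_left htri hε.le
    have h3 : ε * (dist a b + dist b y) = ε * dist a b + ε * dist b y := by ring
    linarith
  have hchain : ∀ n m, n ≤ m → x m ∈ S (x n) := by
    intro n m hnm
    induction m, hnm using Nat.le_induction with
    | base => exact hmemS (x n)
    | succ m hnm ih => exact hSsub (x n) (x m) ih (hstep m)
  have hmono : ∀ n m, n ≤ m → h (x m) + ε * dist (x n) (x m) ≤ h (x n) :=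
    fun n m hnm => hchain n m hnm
  have hLbdd : BddBelow (Set.range fun n => h (x n)) := ⟨B, by rintro _ ⟨n, rfl⟩; exact hbdd _⟩
  set L := ⨅ n, h (x n) with hL
  have hanti : Antitone fun n => h (x n) := antitone_nat_of_succ_le fun n => by
    have h1 := hmono n (n + 1) (Nat.le_succ n)
    have h2 : 0 ≤ ε * dist (x n) (x (n + 1)) := mul_nonneg hε.le dist_nonneg
    linarith
  have htendsL : Filter.Tendsto (fun n => h (x n)) atTop (nhds L) :=
    tendsto_atTop_ciInf hanti hLbdd
  have hLle : ∀ n, L ≤ h (x n) := fun n => ciInf_le hLbdd n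
  have hdistb : ∀ N n, N ≤ n → dist (x N) (x n) ≤ (h (x N) - L) / ε := by
    intro N n hNn
    have h1 := hmono N n hNn
    have h2 := hLle n
    rw [le_div_iff₀ hε]
    have h3 : dist (x N) (x n) * ε = ε * dist (x N) (x n) := mul_comm _ _
    linarith
  have hcauchy : CauchySeq x := by
    apply cauchySeq_of_le_tendsto_0 (fun N => 2 * (h (x N) - L) / ε)
    · intro n m N hn hm
      calc dist (x n) (x m) ≤ dist (x N) (x n) + dist (x N) (x m) := dist_triangle_left _ _ _
        _ ≤ (h (x N) - L) / ε + (h (x N) - L) / ε := add_le_add (hdistb N n hn) (hdistb N m hm)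
        _ = 2 * (h (x N) - L) / ε := by ring
    · have : Filter.Tendsto (fun N => 2 * (h (x N) - L) / ε) atTop
          (nhds (2 * (L - L) / ε)) := ((htendsL.sub_const L).const_mul 2).div_const ε
      simpa using this
  obtain ⟨z, hz⟩ := cauchySeq_tendsto_of_complete hcauchy
  have hzS : ∀ n, h z + ε * dist (x n) z ≤ h (x n) := by
    intro n
    by_contra hcon
    push_neg at hcon
    set δ := (h z + ε * dist (x n) z - h (x n)) / (1 + ε) with hδ
    have hδpos : 0 < δ := div_pos (by linarith) (by linarith)
    have hδeq : δ * (1 + ε) = h z + ε * dist (x n) z - h (x n) := by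
      rw [hδ]; field_simp
    have hev1 : ∀ᶠ m in atTop, h z - δ < h (x m) :=
      hz.eventually (hlsc z (h z - δ) (by linarith))
    have hev2 : ∀ᶠ m in atTop, dist (x n) z - δ < dist (x n) (x m) := by
      have hd : Filter.Tendsto (fun m => dist (x n) (x m)) atTop (nhds (dist (x n) z)) :=
        tendsto_const_nhds.dist hz
      exact hd.eventually (eventually_gt_nhds (by linarith))
    obtain ⟨m, ⟨⟨h1, h2⟩, hmn⟩⟩ := ((hev1.and hev2).and (eventually_ge_atTop n)).exists
    have h3 := hmono n m hmn
    have h4 := mul_lt_mul_of_pos_left h2 hε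
    have h5 : ε * (dist (x n) z - δ) = ε * dist (x n) z - ε * δ := by ring
    have h6 : δ * (1 + ε) = δ + ε * δ := by ring
    linarith
  refine ⟨z, fun y => ?_⟩
  by_contra hcon
  push_neg at hcon
  have hyS : ∀ n, h y + ε * dist (x n) y ≤ h (x n) := by
    intro n
    have h1 := hzS n
    have htri : dist (x n) y ≤ dist (x n) z + dist z y := dist_triangle _ _ _
    have h2 := mul_le_mul_of_nonneg_left htri hε.le
    have h3 : ε * (dist (x n) z + dist z y) = ε * dist (x n) z + ε * dist z y := by ring
    linarith
  have hinfle : ∀ n, sInf (h '' S (x n)) ≤ h y :=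
    fun n => csInf_le (hbddS _) ⟨y, hyS n, rfl⟩
  have hupper : ∀ n, h z ≤ h y + (1/2) ^ n := by
    intro n
    have h1 := hval n (x n)
    have hx1 : x (n + 1) = next n (x n) := rfl
    rw [← hx1] at h1
    have h2 := hzS (n + 1)
    have h3 := hinfle n
    have h4 : 0 ≤ ε * dist (x (n + 1)) z := mul_nonneg hε.le dist_nonneg
    linarith
  have ht : Filter.Tendsto (fun n : ℕ => h y + (1/2:ℝ) ^ n) atTop (nhds (h y)) := by
    have := tendsto_pow_atTop_nhds_zero_of_lt_one (by norm_num : (0:ℝ) ≤ 1/2)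
      (by norm_num : (1/2:ℝ) < 1)
    simpa using tendsto_const_nhds.add this
  have hzy : h z ≤ h y := ge_of_tendsto' ht hupper
  have h5 : 0 ≤ ε * dist z y := mul_nonneg hε.le dist_nonneg
  linarith

/-- If `f : X → ℝ` is lower semicontinuous, Gâteaux differentiable (with derivative `δf`),
bounded below, `G`-invariant, convex with respect to `G`, and `f x ≥ k‖x‖ + c` with
`k, c > 0`, then the Gâteaux derivatives at `G`-invariant points are dense in the ball
of radius `k` of the `G`-invariant dual. -/
theorem gateaux_derivative_range_dense_in_ball
    {X : Type*} [NormedAddCommGroup X] [NormedSpace ℝ X] [CompleteSpace X]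
    {G : Type*} [Group G] [TopologicalSpace G] [IsTopologicalGroup G] [CompactSpace G]
    {mG : MeasurableSpace G} [BorelSpace G]
    (μ : Measure G) [μ.IsHaarMeasure] [IsProbabilityMeasure μ]
    (ρ : G →* (X ≃L[ℝ] X))
    (hactcont : Continuous fun p : G × X => ρ p.1 p.2)
    (hnorminv : ∀ (g : G) (x : X), ‖ρ g x‖ = ‖x‖)
    (f : X → ℝ) (δf : X → (X →L[ℝ] ℝ))
    (hlsc : LowerSemicontinuous f)
    (hgateaux : ∀ x h : X, Tendsto (fun t : ℝ => (f (x + t • h) - f x) / t)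
      (nhdsWithin 0 {0}ᶜ) (nhds (δf x h)))
    (hbdd : BddBelow (Set.range f))
    (hGinv : ∀ (g : G) (x : X), f (ρ g x) = f x)
    (hconv : ∀ x : X, f (∫ g, ρ g x ∂μ) ≤ ∫ g, f (ρ g x) ∂μ)
    (k c : ℝ) (hk : 0 < k) (hc : 0 < c)
    (hgrowth : ∀ x : X, k * ‖x‖ + c ≤ f x) :
    ∀ u : X →L[ℝ] ℝ, (∀ (g : G) (x : X), u (ρ g x) = u x) → ‖u‖ ≤ k →
      ∀ η > (0 : ℝ), ∃ x : X, (∀ g : G, ρ g x = x) ∧ ‖δf x - u‖ < η := by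
  classical
  intro u huinv hunorm η hη
  -- continuity and integrability of orbit maps
  have hcontg : ∀ v : X, Continuous fun g : G => ρ g v := fun v =>
    hactcont.comp (continuous_id.prodMk continuous_const)
  have hint : ∀ v : X, Integrable (fun g : G => ρ g v) μ := by
    intro v
    borelize X
    refine ⟨?_, ?_⟩
    · exact (stronglyMeasurable_iff_measurable_separable.2
        ⟨(hcontg v).measurable, (isCompact_range (hcontg v)).isSeparable⟩).aestronglyMeasurable
    · refine (hasFiniteIntegral_const ‖v‖).mono' ?_
      filter_upwards with g
      simp [hnorminv]
  -- averaging operator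
  set A : X → X := fun v => ∫ g, ρ g v ∂μ with hA
  have hmul : ∀ (g₀ g : G) (v : X), ρ (g₀ * g) v = ρ g₀ (ρ g v) := by
    intro g₀ g v; rw [map_mul]; rfl
  have hAinv : ∀ (g₀ : G) (v : X), ρ g₀ (A v) = A v := by
    intro g₀ v
    calc ρ g₀ (A v) = ∫ g, ρ g₀ (ρ g v) ∂μ :=
          ((ρ g₀).integral_comp_comm fun g => ρ g v).symm
      _ = ∫ g, ρ (g₀ * g) v ∂μ := by simp_rw [hmul]
      _ = A v := integral_mul_left_eq_self (fun g => ρ g v) g₀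
  have hAnorm : ∀ v, ‖A v‖ ≤ ‖v‖ := by
    intro v
    refine (norm_integral_le_integral_norm _).trans ?_
    simp [hnorminv]
  have huA : ∀ v, u (A v) = u v := by
    intro v
    rw [hA]
    rw [← u.integral_comp_comm (hint v)]
    simp [huinv]
  -- the closed submodule of invariant points
  let p : Submodule ℝ X :=
    { carrier := {x | ∀ g : G, ρ g x = x}
      add_mem' := fun ha hb g => by rw [map_add, ha g, hb g]
      zero_mem' := fun g => map_zero _
      smul_mem' := fun r x hx g => by rw [_root_.map_smul, hx g] }
  have hpclosed : IsClosed (p : Set X) := by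
    have hset : (p : Set X) = ⋂ g : G, {x : X | ρ g x = x} := by
      ext x
      simp only [Set.mem_iInter, Set.mem_setOf_eq]
      rfl
    rw [hset]
    exact isClosed_iInter fun g => isClosed_eq (ρ g).continuous continuous_id
  haveI : CompleteSpace p := hpclosed.completeSpace_coe
  haveI : Nonempty p := ⟨0⟩
  -- Ekeland on p for f - u
  have hlscp : LowerSemicontinuous fun y : p => f (y : X) - u (y : X) := by
    have h1 : LowerSemicontinuous fun y : p => f (y : X) :=
      hlsc.comp continuous_subtype_val
    have h2 : LowerSemicontinuous fun y : p => -(u (y : X)) :=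
      (Continuous.neg (u.continuous.comp continuous_subtype_val)).lowerSemicontinuous
    simpa [sub_eq_add_neg] using h1.add h2
  have hbb : ∀ y : p, c ≤ f (y : X) - u (y : X) := by
    intro y
    have h1 := hgrowth (y : X)
    have h2 : u (y : X) ≤ k * ‖(y : X)‖ := by
      refine (le_abs_self _).trans ?_
      rw [← Real.norm_eq_abs]
      refine (u.le_opNorm _).trans ?_
      exact mul_le_mul_of_nonneg_right hunorm (norm_nonneg _)
    linarith
  obtain ⟨xh, hEk⟩ := ekeland_weak (fun y : p => f (y : X) - u (y : X)) hlscp hbb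
    (half_pos hη)
  set x : X := (xh : X) with hxdef
  have hxinv : ∀ g : G, ρ g x = x := xh.2
  -- derivative bound along invariant directions
  have hsub : nhdsWithin (0:ℝ) (Set.Ioi 0) ≤ nhdsWithin 0 {0}ᶜ :=
    nhdsWithin_mono 0 fun t ht => ne_of_gt ht
  have stepA : ∀ v : X, (∀ g : G, ρ g v = v) → u v - η / 2 * ‖v‖ ≤ δf x v := by
    intro v hv
    have hTle : ∀ t ∈ Set.Ioi (0:ℝ), u v - η / 2 * ‖v‖ ≤ (f (x + t • v) - f x) / t := by
      intro t ht
      have htpos : (0:ℝ) < t := ht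
      have hy := hEk (xh + t • (⟨v, hv⟩ : p))
      have hco : ((xh + t • (⟨v, hv⟩ : p) : p) : X) = x + t • v := rfl
      have hdist : dist xh (xh + t • (⟨v, hv⟩ : p)) = t * ‖v‖ := by
        rw [dist_eq_norm]
        have : xh - (xh + t • (⟨v, hv⟩ : p)) = -(t • (⟨v, hv⟩ : p)) := by abel
        rw [this, norm_neg]
        have : ‖t • (⟨v, hv⟩ : p)‖ = ‖t • v‖ := rfl
        rw [this, norm_smul, Real.norm_eq_abs, abs_of_pos htpos]
      rw [hdist, hco] at hy
      have humap : u (x + t • v) = u x + t * u v := by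
        rw [map_add, _root_.map_smul]; rfl
      rw [le_div_iff₀ htpos]
      nlinarith [hy, humap]
    have hlim : Tendsto (fun t => (f (x + t • v) - f x) / t)
        (nhdsWithin 0 (Set.Ioi 0)) (nhds (δf x v)) := (hgateaux x v).mono_left hsub
    exact ge_of_tendsto hlim (eventually_nhdsWithin_of_forall hTle)
  -- averaging identities
  have havg : ∀ (v : X) (t : ℝ), x + t • A v = ∫ g, ρ g (x + t • v) ∂μ := by
    intro v t
    have heq : ∀ g : G, ρ g (x + t • v) = x + t • ρ g v := fun g => by
      rw [map_add, _root_.map_smul, hxinv g]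
    simp_rw [heq]
    have hint2 : Integrable (fun g : G => t • ρ g v) μ := (hint v).smul t
    rw [integral_add (integrable_const x) hint2, integral_const, integral_smul]
    simp [hA]
  have hfle : ∀ (v : X) (t : ℝ), f (x + t • A v) ≤ f (x + t • v) := by
    intro v t
    rw [havg v t]
    refine (hconv (x + t • v)).trans ?_
    have heq : ∀ g : G, f (ρ g (x + t • v)) = f (x + t • v) := fun g => hGinv g _
    simp_rw [heq]
    simp
  have hhalf : ∀ v : X, δf x (A v) ≤ δf x v := by
    intro v
    refine le_of_tendsto_of_tendsto ((hgateaux x (A v)).mono_left hsub)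
      ((hgateaux x v).mono_left hsub) ?_
    refine eventually_nhdsWithin_of_forall ?_
    intro t ht
    have htpos : (0:ℝ) < t := ht
    exact (div_le_div_iff_of_pos_right htpos).mpr (by linarith [hfle v t])
  have hAeq : ∀ v : X, δf x (A v) = δf x v := by
    intro v
    have h1 := hhalf v
    have h2 := hhalf (-v)
    have hAneg : A (-v) = -A v := by
      simp only [hA]
      rw [← integral_neg]
      congr 1
      ext g
      rw [map_neg]
    rw [hAneg, map_neg, map_neg] at h2
    linarith
  -- conclusion
  refine ⟨x, hxinv, ?_⟩
  have hb : ‖δf x - u‖ ≤ η / 2 := by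
    refine ContinuousLinearMap.opNorm_le_bound _ (by positivity) ?_
    intro v
    have h1 := stepA (A v) (fun g => hAinv g v)
    have h2 := stepA (-(A v)) (fun g => by rw [map_neg, hAinv g v])
    rw [map_neg, map_neg, norm_neg] at h2
    have key : |δf x v - u v| ≤ η / 2 * ‖A v‖ := by
      rw [← hAeq v, ← huA v, abs_le]
      constructor <;> linarith
    calc ‖(δf x - u) v‖ = |δf x v - u v| := by
          rw [ContinuousLinearMap.sub_apply, Real.norm_eq_abs]
      _ ≤ η / 2 * ‖A v‖ := key
      _ ≤ η / 2 * ‖v‖ := mul_le_mul_of_nonneg_left (hAnorm v) (by positivity)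
  linarith
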